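/- arXiv:cs/0101032 — 6 statements merged into one kernel-verified Lean document; each statement's English description precedes it below -/
import Mathlib

section
/- Let S = {s₁, …, s_q} be a finite set, W = {S₁, …, S_r} a nonempty family of subsets of S, and h ≥ 0 an integer. Construct the complete bipartite mixed graph H' = (A, B, E') and subgraph H = (A, B, E) by: A = {a₀, a₁, …, a_q}; B = {b₀, b₁, …, b_r}; E' consists of the directed edges b₀→a₀; a₀→b_j for all 1 ≤ j ≤ r; a_i→b₀ for all 1 ≤ i ≤ q; b_j→a_i whenever s_i ∈ S_j; and a_i→b_j whenever s_i ∉ S_j; and E = {a₀→b_j : 1 ≤ j ≤ r}. If there exists S' ⊆ S with |S'| ≤ h containing at least one element of each S_j, then there exists P ⊆ E' − E with |P| ≤ h + r + 1 satisfying Property N1 (every connected component of (A, B, E ∪ P) is strongly connected) and Property N2 (for every connected component D of H, all vertices of D lie in a single connected component of (A, B, P)). -/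
/-- Vertices of the bipartite mixed graph: `Sum.inl none` is `a₀`,
`Sum.inl (some i)` is `a_i`, `Sum.inr none` is `b₀`, `Sum.inr (some j)` is `b_j`. -/
abbrev Vtx (q r : ℕ) := Option (Fin q) ⊕ Option (Fin r)

/-- Direction of the unique edge between `a`-vertex `i` and `b`-vertex `j` in the
complete bipartite mixed graph of the reduction: `True` means directed `a → b`.
The edge `(a₀, b₀)` is directed `b₀ → a₀`; `(a₀, b_j)` is directed `a₀ → b_j`;
`(a_i, b₀)` is directed `a_i → b₀`; `(a_i, b_j)` is directed `b_j → a_i`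
iff `s_i ∈ S_j`. -/
def AtoB {q r : ℕ} (W : Fin r → Set (Fin q)) :
    Option (Fin q) → Option (Fin r) → Prop
  | none, none => False
  | none, some _ => True
  | some _, none => True
  | some i, some j => i ∉ W j

/-- The edge set `E = {a₀ → b_j : 1 ≤ j ≤ r}`. -/
def Eset (q r : ℕ) : Set (Option (Fin q) × Option (Fin r)) :=
  {e | e.1 = none ∧ e.2 ≠ none}

/-- One traversable step along an edge in `S`, respecting edge directions. -/
def TStep {q r : ℕ} (W : Fin r → Set (Fin q))
    (S : Set (Option (Fin q) × Option (Fin r))) (v w : Vtx q r) : Prop :=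
  ∃ e ∈ S, (AtoB W e.1 e.2 ∧ v = Sum.inl e.1 ∧ w = Sum.inr e.2) ∨
           (¬ AtoB W e.1 e.2 ∧ v = Sum.inr e.2 ∧ w = Sum.inl e.1)

/-- Mutual reachability along traversable paths using edges in `S`. -/
def TMut {q r : ℕ} (W : Fin r → Set (Fin q))
    (S : Set (Option (Fin q) × Option (Fin r))) (v w : Vtx q r) : Prop :=
  Relation.ReflTransGen (TStep W S) v w ∧ Relation.ReflTransGen (TStep W S) w v

/-- Direction-blind adjacency via an edge in `S`. -/
def GAdj {q r : ℕ} (S : Set (Option (Fin q) × Option (Fin r))) (v w : Vtx q r) : Prop :=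
  ∃ e ∈ S, (v = Sum.inl e.1 ∧ w = Sum.inr e.2) ∨ (v = Sum.inr e.2 ∧ w = Sum.inl e.1)

/-- Direction-blind connectivity via edges in `S`. -/
def GConn {q r : ℕ} (S : Set (Option (Fin q) × Option (Fin r))) :
    Vtx q r → Vtx q r → Prop :=
  Relation.ReflTransGen (GAdj S)

/-- `D` is a connected component of the (direction-blind) graph with edge set `S`. -/
def GCC {q r : ℕ} (S : Set (Option (Fin q) × Option (Fin r))) (D : Set (Vtx q r)) : Prop :=
  ∃ v, D = {w | GConn S v w}

/-- Property N1: every connected component of the mixed graph with edge set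
`E ∪ P` is strongly connected. -/
def PropN1 {q r : ℕ} (W : Fin r → Set (Fin q))
    (P : Set (Option (Fin q) × Option (Fin r))) : Prop :=
  ∀ D : Set (Vtx q r), GCC (Eset q r ∪ P) D →
    ∀ v ∈ D, ∀ w ∈ D, TMut W (Eset q r ∪ P) v w

/-- Property N2: the vertices of each connected component of `(A, B, E)` are
connected in `(A, B, P)`. -/
def PropN2 {q r : ℕ} (P : Set (Option (Fin q) × Option (Fin r))) : Prop :=
  ∀ D : Set (Vtx q r), GCC (Eset q r) D → ∀ v ∈ D, ∀ w ∈ D, GConn P v w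

/-!
Choose `f j ∈ S' ∩ S_j` for every `j`. Besides `E`, take the edges `b₀ → a₀`, `a_{f j} → b₀`
and `b_j → a_{f j}`: at most `1 + h + r` of them. With `E` they close the directed cycles
`a₀ → b_j → a_{f j} → b₀ → a₀`, so every vertex touched by `E ∪ P` is mutually reachable with
`a₀`, which gives N1; forgetting directions, the same cycles join `a₀` to every `b_j` inside
`P`, which gives N2.
-/

open Set Relation

section

variable {q r : ℕ}

theorem GAdj.symm {S : Set (Option (Fin q) × Option (Fin r))} {v w : Vtx q r}
    (h : GAdj S v w) : GAdj S w v := by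
  obtain ⟨e, he, ⟨rfl, rfl⟩ | ⟨rfl, rfl⟩⟩ := h
  exacts [⟨e, he, .inr ⟨rfl, rfl⟩⟩, ⟨e, he, .inl ⟨rfl, rfl⟩⟩]

instance (S : Set (Option (Fin q) × Option (Fin r))) : Std.Symm (GAdj S) :=
  ⟨fun _ _ => GAdj.symm⟩

theorem GConn.symm {S : Set (Option (Fin q) × Option (Fin r))} {v w : Vtx q r}
    (h : GConn S v w) : GConn S w v :=
  Std.Symm.symm (r := ReflTransGen (GAdj S)) _ _ h

theorem GCC.gConn {S : Set (Option (Fin q) × Option (Fin r))} {D : Set (Vtx q r)}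
    (hD : GCC S D) {v w : Vtx q r} (hv : v ∈ D) (hw : w ∈ D) : GConn S v w := by
  obtain ⟨u, rfl⟩ := hD
  exact GConn.symm hv |>.trans hw

theorem propN1_of_gAdj_reach {W : Fin r → Set (Fin q)} {P : Set (Option (Fin q) × Option (Fin r))}
    (h : ∀ v w, GAdj (Eset q r ∪ P) v w → ReflTransGen (TStep W (Eset q r ∪ P)) v w) :
    PropN1 W P := by
  intro D hD v hv w hw
  have reach := reflTransGen_closed h
  exact ⟨reach _ _ (hD.gConn hv hw), reach _ _ (hD.gConn hw hv)⟩

theorem propN2_of_gAdj_gConn {P : Set (Option (Fin q) × Option (Fin r))}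
    (h : ∀ v w, GAdj (Eset q r) v w → GConn P v w) : PropN2 P :=
  fun _ hD _ hv _ hw => reflTransGen_closed h _ _ (hD.gConn hv hw)

theorem TStep.of_atoB {W : Fin r → Set (Fin q)} {S : Set (Option (Fin q) × Option (Fin r))}
    {e : Option (Fin q) × Option (Fin r)} (he : e ∈ S) (h : AtoB W e.1 e.2) :
    TStep W S (.inl e.1) (.inr e.2) :=
  ⟨e, he, .inl ⟨h, rfl, rfl⟩⟩

theorem TStep.of_not_atoB {W : Fin r → Set (Fin q)} {S : Set (Option (Fin q) × Option (Fin r))}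
    {e : Option (Fin q) × Option (Fin r)} (he : e ∈ S) (h : ¬ AtoB W e.1 e.2) :
    TStep W S (.inr e.2) (.inl e.1) :=
  ⟨e, he, .inr ⟨h, rfl, rfl⟩⟩

theorem mem_Eset_iff {e : Option (Fin q) × Option (Fin r)} :
    e ∈ Eset q r ↔ ∃ j, e = (none, some j) := by
  obtain ⟨i, j⟩ := e
  cases j <;> simp [Eset]

def hittingEdges (f : Fin r → Fin q) : Set (Option (Fin q) × Option (Fin r)) :=
  insert (none, none) (range (fun j => (some (f j), none)) ∪ range (fun j => (some (f j), some j)))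

variable (f : Fin r → Fin q)

theorem not_mem_Eset_of_mem_hittingEdges :
    ∀ e ∈ hittingEdges f, e ∉ Eset q r := by
  rintro e (rfl | ⟨j, rfl⟩ | ⟨j, rfl⟩) <;> simp [mem_Eset_iff]

theorem ncard_hittingEdges_le : (hittingEdges f).ncard ≤ (range f).ncard + r + 1 := by
  have h₁ : (range fun j => ((some (f j) : Option (Fin q)), (none : Option (Fin r)))).ncard ≤
      (range f).ncard := by
    rw [← image_univ, ← image_image (fun i => ((some i : Option (Fin q)), (none : Option (Fin r)))),
      image_univ]
    exact ncard_image_le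
  have h₂ : (range fun j => ((some (f j) : Option (Fin q)), (some j : Option (Fin r)))).ncard ≤ r := by
    rw [← image_univ]
    exact (ncard_image_le).trans (by simp)
  calc (hittingEdges f).ncard
      ≤ (range fun j => ((some (f j) : Option (Fin q)), (none : Option (Fin r)))).ncard +
        (range fun j => ((some (f j) : Option (Fin q)), (some j : Option (Fin r)))).ncard + 1 :=
        (ncard_insert_le _ _).trans (Nat.add_le_add_right (ncard_union_le _ _) 1)
    _ ≤ (range f).ncard + r + 1 := by omega

theorem propN2_hittingEdges : PropN2 (hittingEdges f) := by
  refine propN2_of_gAdj_gConn fun v w hvw => ?_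
  obtain ⟨e, he, hvw⟩ := hvw
  obtain ⟨j, rfl⟩ := mem_Eset_iff.mp he
  have a₀_b₀ : GAdj (hittingEdges f) (.inl none) (.inr none) :=
    ⟨(none, none), mem_insert _ _, .inl ⟨rfl, rfl⟩⟩
  have b₀_a : GAdj (hittingEdges f) (.inr none) (.inl (some (f j))) :=
    ⟨(some (f j), none), .inr (.inl ⟨j, rfl⟩), .inr ⟨rfl, rfl⟩⟩
  have a_b : GAdj (hittingEdges f) (.inl (some (f j))) (.inr (some j)) :=
    ⟨(some (f j), some j), .inr (.inr ⟨j, rfl⟩), .inl ⟨rfl, rfl⟩⟩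
  have a₀_b : GConn (hittingEdges f) (.inl none) (.inr (some j)) :=
    ((ReflTransGen.single a₀_b₀).tail b₀_a).tail a_b
  rcases hvw with ⟨rfl, rfl⟩ | ⟨rfl, rfl⟩
  exacts [a₀_b, a₀_b.symm]

theorem tMut_a₀_of_mem_hittingEdges {W : Fin r → Set (Fin q)} (hr : 0 < r)
    (hf : ∀ j, f j ∈ W j) {e : Option (Fin q) × Option (Fin r)}
    (he : e ∈ Eset q r ∪ hittingEdges f) :
    TMut W (Eset q r ∪ hittingEdges f) (.inl e.1) (.inl none) ∧
      TMut W (Eset q r ∪ hittingEdges f) (.inr e.2) (.inl none) := by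
  set S := Eset q r ∪ hittingEdges f
  have a₀_b (j : Fin r) : TStep W S (.inl none) (.inr (some j)) :=
    .of_atoB (e := (none, some j)) (.inl (mem_Eset_iff.mpr ⟨j, rfl⟩)) trivial
  have b_a (j : Fin r) : TStep W S (.inr (some j)) (.inl (some (f j))) :=
    .of_not_atoB (e := (some (f j), some j)) (.inr (.inr (.inr ⟨j, rfl⟩))) (not_not.mpr (hf j))
  have a_b₀ (j : Fin r) : TStep W S (.inl (some (f j))) (.inr none) :=
    .of_atoB (e := (some (f j), none)) (.inr (.inr (.inl ⟨j, rfl⟩))) trivial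
  have b₀_a₀ : TStep W S (.inr none) (.inl none) :=
    .of_not_atoB (e := (none, none)) (.inr (mem_insert _ _)) id
  have tMut_b (j : Fin r) : TMut W S (.inr (some j)) (.inl none) :=
    ⟨((ReflTransGen.single (b_a j)).tail (a_b₀ j)).tail b₀_a₀, .single (a₀_b j)⟩
  have tMut_a (j : Fin r) : TMut W S (.inl (some (f j))) (.inl none) :=
    ⟨(ReflTransGen.single (a_b₀ j)).tail b₀_a₀, (ReflTransGen.single (a₀_b j)).tail (b_a j)⟩
  have tMut_b₀ : TMut W S (.inr none) (.inl none) :=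
    ⟨.single b₀_a₀, (tMut_a ⟨0, hr⟩).2.tail (a_b₀ ⟨0, hr⟩)⟩
  have tMut_a₀ : TMut W S (.inl none) (.inl none) := ⟨.refl, .refl⟩
  rcases he with he | rfl | ⟨j, rfl⟩ | ⟨j, rfl⟩
  · obtain ⟨j, rfl⟩ := mem_Eset_iff.mp he
    exact ⟨tMut_a₀, tMut_b j⟩
  exacts [⟨tMut_a₀, tMut_b₀⟩, ⟨tMut_a j, tMut_b₀⟩, ⟨tMut_a j, tMut_b j⟩]

theorem propN1_hittingEdges {W : Fin r → Set (Fin q)} (hr : 0 < r) (hf : ∀ j, f j ∈ W j) :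
    PropN1 W (hittingEdges f) := by
  refine propN1_of_gAdj_reach fun v w ⟨e, he, hvw⟩ => ?_
  obtain ⟨ha, hb⟩ := tMut_a₀_of_mem_hittingEdges f hr hf he
  rcases hvw with ⟨rfl, rfl⟩ | ⟨rfl, rfl⟩
  exacts [ha.1.trans hb.2, hb.1.trans ha.2]

end

/-- If the hitting set instance has a solution of size at most `h`, then the reduction
instance has a solution `P ⊆ E' - E` of size at most `h + r + 1` satisfying
Properties N1 and N2. -/
theorem stmt11 (q r h : ℕ) (hr : 0 < r) (W : Fin r → Set (Fin q))
    (hhit : ∃ S' : Set (Fin q), S'.ncard ≤ h ∧ ∀ j, (S' ∩ W j).Nonempty) :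
    ∃ P : Set (Option (Fin q) × Option (Fin r)),
      (∀ e ∈ P, e ∉ Eset q r) ∧ P.ncard ≤ h + r + 1 ∧ PropN1 W P ∧ PropN2 P := by
  obtain ⟨S', hS'h, hS'⟩ := hhit
  choose f hfS' hfW using hS'
  have hrange : (range f).ncard ≤ h :=
    (ncard_le_ncard (range_subset_iff.mpr hfS')).trans hS'h
  exact ⟨hittingEdges f, not_mem_Eset_of_mem_hittingEdges f,
    (ncard_hittingEdges_le f).trans (by omega), propN1_hittingEdges f hr hfW,
    propN2_hittingEdges f⟩
end

section
/- Let S = {s₁, …, s_q} be a finite set, W = {S₁, …, S_r} a nonempty family of subsets of S, and h ≥ 0 an integer. Construct the complete bipartite mixed graph H' = (A, B, E') and subgraph H = (A, B, E) by: A = {a₀, a₁, …, a_q}; B = {b₀, b₁, …, b_r}; E' consists of the directed edges b₀→a₀; a₀→b_j for all 1 ≤ j ≤ r; a_i→b₀ for all 1 ≤ i ≤ q; b_j→a_i whenever s_i ∈ S_j; and a_i→b_j whenever s_i ∉ S_j; and E = {a₀→b_j : 1 ≤ j ≤ r}. If there exists P ⊆ E' − E with |P| ≤ h + r + 1 satisfying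 Property N1 (every connected component of (A, B, E ∪ P) is strongly connected) and Property N2 (for every connected component D of H, all vertices of D lie in a single connected component of (A, B, P)), then there exists S' ⊆ S with |S'| ≤ h containing at least one element of each S_j. -/
/-- `n`-step direction-blind reachability via edges in `P`. -/
def reachN {q r : ℕ} (P : Set (Option (Fin q) × Option (Fin r))) :
    ℕ → Vtx q r → Vtx q r → Prop
  | 0, a, b => a = b
  | n+1, a, b => ∃ c, reachN P n a c ∧ GAdj P c b

lemma gconn_iff_reachN {q r : ℕ} {P : Set (Option (Fin q) × Option (Fin r))}
    {a b : Vtx q r} : GConn P a b ↔ ∃ n, reachN P n a b := by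
  constructor
  · intro hab
    induction hab with
    | refl => exact ⟨0, rfl⟩
    | tail _ hstep ih => obtain ⟨n, hn⟩ := ih; exact ⟨n + 1, _, hn, hstep⟩
  · rintro ⟨n, hn⟩
    induction n generalizing b with
    | zero => cases hn; exact Relation.ReflTransGen.refl
    | succ n ih => obtain ⟨c, hc, hstep⟩ := hn; exact (ih hc).tail hstep

/-- The vertices (other than the root) reachable from a root in the direction-blind
graph with edge set `P` inject into `P`. -/
lemma ncard_reach_le {q r : ℕ} (P : Set (Option (Fin q) × Option (Fin r)))
    (v₀ : Vtx q r) : {w | GConn P v₀ w ∧ w ≠ v₀}.ncard ≤ P.ncard := by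
  classical
  have hex : ∀ w : Vtx q r, ∃ (e : Option (Fin q) × Option (Fin r)) (d : ℕ),
      w ∈ {w | GConn P v₀ w ∧ w ≠ v₀} →
      e ∈ P ∧ (∀ d', reachN P d' v₀ w → d + 1 ≤ d') ∧
      ∃ c, reachN P d v₀ c ∧
        ((c = Sum.inl e.1 ∧ w = Sum.inr e.2) ∨ (c = Sum.inr e.2 ∧ w = Sum.inl e.1)) := by
    intro w
    by_cases hw : w ∈ {w | GConn P v₀ w ∧ w ≠ v₀}
    · obtain ⟨hconn, hne⟩ := hw
      have h : ∃ n, reachN P n v₀ w := gconn_iff_reachN.mp hconn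
      have hn0 : Nat.find h ≠ 0 := by
        intro h0
        have hsp := Nat.find_spec h
        rw [h0] at hsp
        exact hne hsp.symm
      obtain ⟨m, hm⟩ := Nat.exists_eq_succ_of_ne_zero hn0
      have hspec := Nat.find_spec h
      rw [hm] at hspec
      obtain ⟨c, hc, e, he, hdisj⟩ := hspec
      refine ⟨e, m, fun _ => ⟨he, ?_, c, hc, hdisj⟩⟩
      intro d' hd'
      have := Nat.find_min' h hd'
      omega
    · exact ⟨(none, none), 0, fun hcon => absurd hcon hw⟩
  choose f d hf using hex
  refine Set.ncard_le_ncard_of_injOn f (fun w hw => (hf w hw).1) ?_ P.toFinite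
  intro w hw w' hw' heq
  by_contra hne
  obtain ⟨hmin, c, hc, hdj⟩ := (hf w hw).2
  obtain ⟨hmin', c', hc', hdj'⟩ := (hf w' hw').2
  rw [← heq] at hdj'
  obtain hdj | hdj := hdj <;> obtain hdj' | hdj' := hdj' <;>
    obtain ⟨hcw, hw2⟩ := hdj <;> obtain ⟨hcw', hw2'⟩ := hdj'
  · exact hne (hw2.trans hw2'.symm)
  · rw [← hw2'] at hcw; rw [← hw2] at hcw'
    have h1 := hmin (d w') (by rw [hcw'] at hc'; exact hc')
    have h2 := hmin' (d w) (by rw [hcw] at hc; exact hc)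
    omega
  · rw [← hw2'] at hcw; rw [← hw2] at hcw'
    have h1 := hmin (d w') (by rw [hcw'] at hc'; exact hc')
    have h2 := hmin' (d w) (by rw [hcw] at hc; exact hc)
    omega
  · exact hne (hw2.trans hw2'.symm)

/-- If the reduction instance has a solution `P ⊆ E' - E` of size at most `h + r + 1`
satisfying Properties N1 and N2, then the hitting set instance has a solution of size
at most `h`. -/
theorem stmt12 (q r h : ℕ) (hr : 0 < r) (W : Fin r → Set (Fin q))
    (hP : ∃ P : Set (Option (Fin q) × Option (Fin r)),
      (∀ e ∈ P, e ∉ Eset q r) ∧ P.ncard ≤ h + r + 1 ∧ PropN1 W P ∧ PropN2 P) :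
    ∃ S' : Set (Fin q), S'.ncard ≤ h ∧ ∀ j, (S' ∩ W j).Nonempty := by
  classical
  obtain ⟨P, hPE, hcard, hN1, hN2⟩ := hP
  set a0 : Vtx q r := Sum.inl none with ha0
  -- all `b_j` are connected to `a₀` in the graph `P`, by Property N2
  have hconnPb : ∀ j : Fin r, GConn P a0 (Sum.inr (some j)) := by
    intro j
    refine hN2 {w | GConn (Eset q r) a0 w} ⟨a0, rfl⟩ a0 Relation.ReflTransGen.refl
      (Sum.inr (some j)) ?_
    exact Relation.ReflTransGen.single
      ⟨(none, some j), ⟨rfl, by simp⟩, Or.inl ⟨rfl, rfl⟩⟩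
  -- the edge `(a₀, b₀)` belongs to `P`
  have hbb : ((none, none) : Option (Fin q) × Option (Fin r)) ∈ P := by
    have h := hconnPb ⟨0, hr⟩
    rcases h.cases_head with heq | ⟨c, hstep, _⟩
    · exact absurd heq (by simp [a0])
    · obtain ⟨e, heP, hd⟩ := hstep
      rcases hd with ⟨h1, _⟩ | ⟨h1, _⟩
      · have he1 : e.1 = none := by simpa [a0, eq_comm] using h1
        have he2 : e.2 = none := by
          by_contra h2
          exact hPE e heP ⟨he1, h2⟩
        have : e = (none, none) := by
          ext <;> simp [he1, he2]
        rwa [this] at heP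
      · exact absurd h1 (by simp [a0])
  -- the hitting set
  set S' : Set (Fin q) := {i | ∃ j, (some i, some j) ∈ P ∧ i ∈ W j} with hS'
  -- hitting property, from Property N1
  have hhit : ∀ j, (S' ∩ W j).Nonempty := by
    intro j
    have hbD : Sum.inr (some j) ∈ {w | GConn (Eset q r ∪ P) a0 w} :=
      Relation.ReflTransGen.single
        ⟨(none, some j), Or.inl ⟨rfl, by simp⟩, Or.inl ⟨rfl, rfl⟩⟩
    have haD : a0 ∈ {w | GConn (Eset q r ∪ P) a0 w} := Relation.ReflTransGen.refl
    have hmut := hN1 _ ⟨a0, rfl⟩ _ hbD _ haD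
    rcases hmut.1.cases_head with heq | ⟨c, hstep, _⟩
    · exact absurd heq (by simp [a0])
    · obtain ⟨e, heEP, hd⟩ := hstep
      rcases hd with ⟨_, h1, _⟩ | ⟨hna, h1, _⟩
      · exact absurd h1 (by simp)
      · have he2 : e.2 = some j := by simpa using h1.symm
        cases he1 : e.1 with
        | none =>
          rw [he1, he2] at hna
          simp [AtoB] at hna
        | some i =>
          rw [he1, he2] at hna
          have hiW : i ∈ W j := by
            by_contra hcon
            exact hna hcon
          have heP : e ∈ P := by
            rcases heEP with hE | hP'
            · exact absurd hE.1 (by simp [he1])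
            · exact hP'
          have hmem : (some i, some j) ∈ P := by
            rw [← he1, ← he2]; exact heP
          exact ⟨i, ⟨j, hmem, hiW⟩, hiW⟩
  -- counting: `b₀`, all `b_j`, and all `a_i` with `i ∈ S'` are in the
  -- `P`-component of `a₀`
  have hTb0 : GConn P a0 (Sum.inr none) :=
    Relation.ReflTransGen.single ⟨(none, none), hbb, Or.inl ⟨rfl, rfl⟩⟩
  have hTa : ∀ i ∈ S', GConn P a0 (Sum.inl (some i)) := by
    rintro i ⟨j, hij, -⟩
    exact (hconnPb j).tail ⟨(some i, some j), hij, Or.inr ⟨rfl, rfl⟩⟩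
  have hsub : (Sum.inr '' (Set.univ : Set (Option (Fin r))) ∪
      (fun i => (Sum.inl (some i) : Vtx q r)) '' S')
      ⊆ {w | GConn P a0 w ∧ w ≠ a0} := by
    rintro w (⟨b, -, rfl⟩ | ⟨i, hi, rfl⟩)
    · refine ⟨?_, by simp [a0]⟩
      cases b with
      | none => exact hTb0
      | some j => exact hconnPb j
    · exact ⟨hTa i hi, by simp [a0]⟩
  have hcount := (Set.ncard_le_ncard hsub (Set.toFinite _)).trans
    (ncard_reach_le P a0)
  have hdisj : Disjoint (Sum.inr '' (Set.univ : Set (Option (Fin r))))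
      ((fun i => (Sum.inl (some i) : Vtx q r)) '' S') := by
    rw [Set.disjoint_left]
    rintro x ⟨b, -, rfl⟩ ⟨i, -, hix⟩
    simp at hix
  have hcardU : (Sum.inr '' (Set.univ : Set (Option (Fin r))) ∪
      (fun i => (Sum.inl (some i) : Vtx q r)) '' S').ncard = (r + 1) + S'.ncard := by
    rw [Set.ncard_union_eq hdisj (Set.toFinite _) (Set.toFinite _)]
    congr 1
    · rw [Set.ncard_image_of_injective _ Sum.inr_injective]
      simp [Set.ncard_univ]
    · exact Set.ncard_image_of_injective _ (fun a b hab => by simpa using hab)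
  rw [hcardU] at hcount
  exact ⟨S', by omega, hhit⟩
end

section
/- Let T be a table such that every cell value is strictly between its bounds (so the total graph of T is undirected), let E be its set of suppressed cells, let Q ⊆ E, and let P be a set of cells of T not in E. Then Q is totally protected in the table T̄_P obtained from T by additionally suppressing the cells in P if and only if for every connected component D of the bipartite graph (A, B, Q), all vertices of D lie in a single connected component of the bipartite graph (A, B, (E − Q) ∪ P), where A and B are the rows and columns of T. -/
/-- A two-dimensional table: values, lower/upper bounds, and a set of suppressed cells. -/
structure Table (R C : Type*) where
  val : R × C → ℝ
  lo : R × C → ℝ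
  hi : R × C → ℝ
  sup : Set (R × C)
  lo_le : ∀ e, lo e ≤ val e
  le_hi : ∀ e, val e ≤ hi e
  lo_lt_hi : ∀ e, lo e < hi e

variable {R C : Type*}

/-- A bounded feasible assignment of a table. -/
def BFA [Fintype R] [Fintype C] (T : Table R C) (x : R × C → ℝ) : Prop :=
  (∀ e, e ∉ T.sup → x e = T.val e) ∧
  (∀ e ∈ T.sup, T.lo e ≤ x e ∧ x e ≤ T.hi e) ∧
  (∀ i : R, ∑ j, x (i, j) = ∑ j, T.val (i, j)) ∧
  (∀ j : C, ∑ i, x (i, j) = ∑ i, T.val (i, j))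

/-- One traversable step in the mixed graph with edge set `S`: the edge of a cell `e`
may be traversed from its row endpoint to its column endpoint iff `val e < hi e`,
and from its column endpoint to its row endpoint iff `lo e < val e`. -/
def MStep (T : Table R C) (S : Set (R × C)) (v w : R ⊕ C) : Prop :=
  ∃ e ∈ S, (T.val e < T.hi e ∧ v = Sum.inl e.1 ∧ w = Sum.inr e.2) ∨
           (T.lo e < T.val e ∧ v = Sum.inr e.2 ∧ w = Sum.inl e.1)

/-- Reachability along traversable paths in the mixed graph with edge set `S`. -/
def MReach (T : Table R C) (S : Set (R × C)) : (R ⊕ C) → (R ⊕ C) → Prop :=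
  Relation.ReflTransGen (MStep T S)

/-- Mutual reachability in the mixed graph with edge set `S`. -/
def MutReach (T : Table R C) (S : Set (R × C)) (v w : R ⊕ C) : Prop :=
  MReach T S v w ∧ MReach T S w v

/-- `D` is a strongly connected component of the mixed graph with edge set `S`:
an equivalence class of mutual reachability. -/
def IsSCC (T : Table R C) (S : Set (R × C)) (D : Set (R ⊕ C)) : Prop :=
  ∃ v, D = {w | MutReach T S v w}

/-- Direction-blind adjacency via an edge in `S`. -/
def Adj (S : Set (R × C)) (v w : R ⊕ C) : Prop :=
  ∃ e ∈ S, (v = Sum.inl e.1 ∧ w = Sum.inr e.2) ∨ (v = Sum.inr e.2 ∧ w = Sum.inl e.1)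

/-- Direction-blind connectivity via edges in `S`. -/
def Conn (S : Set (R × C)) : (R ⊕ C) → (R ⊕ C) → Prop :=
  Relation.ReflTransGen (Adj S)

/-- `D` is a connected component of the (direction-blind) graph with edge set `S`. -/
def IsCC (S : Set (R × C)) (D : Set (R ⊕ C)) : Prop :=
  ∃ v, D = {w | Conn S v w}

/-- The edges of `S` with both endpoints in the vertex set `D`. -/
def EdgesIn (S : Set (R × C)) (D : Set (R ⊕ C)) : Set (R × C) :=
  {e | e ∈ S ∧ Sum.inl e.1 ∈ D ∧ Sum.inr e.2 ∈ D}

/-- All vertices of `D` are joined by direction-blind paths using edges in `S`. -/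
def ConnectedOn (S : Set (R × C)) (D : Set (R ⊕ C)) : Prop :=
  ∀ v ∈ D, ∀ w ∈ D, Conn S v w

/-- `F` is entire: it is the sum of a power series centered at some point with
infinite radius of convergence. -/
def Entire {ι : Type*} [Fintype ι] (F : (ι → ℝ) → ℝ) : Prop :=
  ∃ (p : FormalMultilinearSeries ℝ (ι → ℝ) ℝ) (c : ι → ℝ),
    HasFPowerSeriesOnBall F p c ⊤

/-- `F x` depends only on the coordinates `x e` with `e ∈ S`. -/
def DependsOnlyOn {ι : Type*} (F : (ι → ℝ) → ℝ) (S : Set ι) : Prop :=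
  ∀ x y : ι → ℝ, (∀ e ∈ S, x e = y e) → F x = F y

/-- `S` is the effective area of `F`: the smallest set of coordinates that `F`
depends on. -/
def IsEA {ι : Type*} (F : (ι → ℝ) → ℝ) (S : Set ι) : Prop :=
  DependsOnlyOn F S ∧ ∀ S', DependsOnlyOn F S' → S ⊆ S'

/-- `F` takes the same value at every bounded feasible assignment of `T`. -/
def TableInvariant [Fintype R] [Fintype C] (T : Table R C) (F : (R × C → ℝ) → ℝ) : Prop :=
  ∀ x y, BFA T x → BFA T y → F x = F y

/-- `Q` is totally protected in `T`: there is no nonconstant analytic invariant of `T`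
whose effective area is contained in `Q`. -/
def TotallyProtected [Fintype R] [Fintype C] (T : Table R C) (Q : Set (R × C)) : Prop :=
  ¬ ∃ (F : (R × C → ℝ) → ℝ) (S : Set (R × C)),
      Entire F ∧ DependsOnlyOn F T.sup ∧ TableInvariant T F ∧
      IsEA F S ∧ S ⊆ Q ∧ S.Nonempty

/-- The table obtained from `T` by additionally suppressing the cells in `P`. -/
def Table.addSup (T : Table R C) (P : Set (R × C)) : Table R C :=
  { T with sup := T.sup ∪ P }


section AuxLemmas

open scoped Classical

variable {R C : Type*}

lemma adj_symm {S : Set (R × C)} {v w : R ⊕ C} (h : Adj S v w) : Adj S w v := by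
  obtain ⟨e, he, h | h⟩ := h
  · exact ⟨e, he, Or.inr ⟨h.2, h.1⟩⟩
  · exact ⟨e, he, Or.inl ⟨h.2, h.1⟩⟩

lemma conn_symm {S : Set (R × C)} {v w : R ⊕ C} (h : Conn S v w) : Conn S w v := by
  induction h with
  | refl => exact Relation.ReflTransGen.refl
  | tail _ hadj ih => exact Relation.ReflTransGen.head (adj_symm hadj) ih

lemma exists_flip {Q : Set (R × C)} {U : Set (R ⊕ C)} {a : R ⊕ C} (ha : a ∈ U) :
    ∀ {b}, Conn Q a b → b ∉ U → ∃ v w, Adj Q v w ∧ v ∈ U ∧ w ∉ U := by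
  intro b h
  induction h with
  | refl => exact fun hb => absurd ha hb
  | @tail c d hac hadj ih =>
    intro hd
    by_cases hc : c ∈ U
    · exact ⟨c, d, hadj, hc, hd⟩
    · exact ih hc

lemma sum_indicator_row [Fintype C] (e : R × C) (i : R) :
    ∑ j, (if (i, j) = e then (1:ℝ) else 0) = if i = e.1 then 1 else 0 := by
  obtain ⟨a, b⟩ := e
  simp only [Prod.mk.injEq, ite_and]
  rcases eq_or_ne i a with h | h
  · simp [h]
  · simp [h]

lemma sum_indicator_col [Fintype R] (e : R × C) (j : C) :
    ∑ i, (if (i, j) = e then (1:ℝ) else 0) = if j = e.2 then 1 else 0 := by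
  obtain ⟨a, b⟩ := e
  simp only [Prod.mk.injEq, ite_and]
  rcases eq_or_ne j b with h | h
  · simp [h]
  · simp [h]

lemma walk_vec [Fintype R] [Fintype C] {S : Set (R × C)} {v w : R ⊕ C} (h : Conn S v w) :
    ∃ z : R × C → ℝ, (∀ e, e ∉ S → z e = 0) ∧
      (∀ i : R, ∑ j, z (i, j) =
        (if Sum.inl i = v then 1 else 0) - (if Sum.inl i = w then 1 else 0)) ∧
      (∀ j : C, ∑ i, z (i, j) =
        (if Sum.inr j = w then 1 else 0) - (if Sum.inr j = v then 1 else 0)) := by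
  induction h with
  | refl => exact ⟨0, by simp, by simp, by simp⟩
  | @tail u w' huv hadj ih =>
    obtain ⟨z, hz0, hzr, hzc⟩ := ih
    obtain ⟨e, he, hcase⟩ := hadj
    rcases hcase with ⟨hu, hw⟩ | ⟨hu, hw⟩
    · refine ⟨z + fun f => if f = e then 1 else 0, ?_, ?_, ?_⟩
      · intro f hf
        simp only [Pi.add_apply, hz0 f hf]
        rw [if_neg (by rintro rfl; exact hf he), add_zero]
      · intro i
        simp only [Pi.add_apply, Finset.sum_add_distrib, hzr i, sum_indicator_row, hu, hw]
        rcases eq_or_ne i e.1 with h | h <;> simp [h, Sum.inl.injEq] <;> ring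
      · intro j
        simp only [Pi.add_apply, Finset.sum_add_distrib, hzc j, sum_indicator_col, hu, hw]
        rcases eq_or_ne j e.2 with h | h <;> simp [h, Sum.inr.injEq] <;> ring
    · refine ⟨z - fun f => if f = e then 1 else 0, ?_, ?_, ?_⟩
      · intro f hf
        simp only [Pi.sub_apply, hz0 f hf]
        rw [if_neg (by rintro rfl; exact hf he), sub_zero]
      · intro i
        simp only [Pi.sub_apply, Finset.sum_sub_distrib, hzr i, sum_indicator_row, hu, hw]
        rcases eq_or_ne i e.1 with h | h <;> simp [h, Sum.inl.injEq] <;> ring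
      · intro j
        simp only [Pi.sub_apply, Finset.sum_sub_distrib, hzc j, sum_indicator_col, hu, hw]
        rcases eq_or_ne j e.2 with h | h <;> simp [h, Sum.inr.injEq] <;> ring

end AuxLemmas

/-- For a table whose total graph is undirected (every value strictly between its
bounds), `Q` is totally protected after additionally suppressing `P` iff the vertices
of each connected component of `(A, B, Q)` are connected in `(A, B, (E - Q) ∪ P)`. -/
theorem stmt13 [Fintype R] [Fintype C] [Nonempty R] [Nonempty C]
    (T : Table R C) (hund : ∀ e, T.lo e < T.val e ∧ T.val e < T.hi e)
    (Q : Set (R × C)) (hQ : Q ⊆ T.sup)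
    (P : Set (R × C)) (hP : ∀ e ∈ P, e ∉ T.sup) :
    TotallyProtected (T.addSup P) Q ↔
      ∀ D : Set (R ⊕ C), IsCC Q D → ConnectedOn ((T.sup \ Q) ∪ P) D := by
  classical
  set T' := T.addSup P with hT'
  set Scyc : Set (R × C) := (T.sup \ Q) ∪ P with hScycdef
  have hQdisj : ∀ f ∈ Q, f ∉ Scyc := by
    intro f hf hmem
    rcases hmem with ⟨_, hnq⟩ | hp
    · exact hnq hf
    · exact hP f hp (hQ hf)
  constructor
  · -- TotallyProtected → connectivity
    intro htp D hD v hv w hw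
    obtain ⟨v₀, rfl⟩ := hD
    by_contra hnc
    have hab : Conn Q v w := Relation.ReflTransGen.trans (conn_symm hv) hw
    set U : Set (R ⊕ C) := {u | Conn Scyc v u} with hU
    have hUclosed : ∀ f ∈ Scyc, (Sum.inl f.1 ∈ U ↔ Sum.inr f.2 ∈ U) := by
      intro f hf
      constructor
      · intro h; exact Relation.ReflTransGen.tail h ⟨f, hf, Or.inl ⟨rfl, rfl⟩⟩
      · intro h; exact Relation.ReflTransGen.tail h ⟨f, hf, Or.inr ⟨rfl, rfl⟩⟩
    have haU : v ∈ U := Relation.ReflTransGen.refl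
    have hbU : w ∉ U := hnc
    obtain ⟨x₁, y₁, hadj, hx₁, hy₁⟩ := exists_flip haU hab hbU
    set c : R × C → ℝ :=
      fun f => (if Sum.inl f.1 ∈ U then (1:ℝ) else 0) - (if Sum.inr f.2 ∈ U then 1 else 0)
      with hc
    obtain ⟨e₀, he₀Q, he₀c⟩ : ∃ e₀ ∈ Q, c e₀ ≠ 0 := by
      obtain ⟨e, he, hcase⟩ := hadj
      rcases hcase with ⟨h1, h2⟩ | ⟨h1, h2⟩
      · refine ⟨e, he, ?_⟩
        simp only [hc]
        rw [if_pos (h1 ▸ hx₁), if_neg (h2 ▸ hy₁)]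
        norm_num
      · refine ⟨e, he, ?_⟩
        simp only [hc]
        rw [if_neg (h2 ▸ hy₁), if_pos (h1 ▸ hx₁)]
        norm_num
    set q : R × C → ℝ := fun f => if f ∈ Q then c f else 0 with hq
    set F : (R × C → ℝ) → ℝ := fun x => ∑ f : R × C, q f * x f with hF
    have hczero : ∀ f ∈ Scyc, c f = 0 := by
      intro f hf
      have hiff := hUclosed f hf
      simp only [hc]
      by_cases h : Sum.inl f.1 ∈ U
      · rw [if_pos h, if_pos (hiff.mp h)]; ring
      · rw [if_neg h, if_neg (fun hh => h (hiff.mpr hh))]; ring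
    have hFentire : Entire F := by
      set L : ((R × C) → ℝ) →L[ℝ] ℝ :=
        ∑ f : R × C, q f • (ContinuousLinearMap.proj f : ((R × C) → ℝ) →L[ℝ] ℝ) with hL
      have hFL : F = ⇑L := by
        funext x
        simp only [hF, hL]
        simp [ContinuousLinearMap.sum_apply, ContinuousLinearMap.smul_apply,
          ContinuousLinearMap.proj_apply, smul_eq_mul]
      exact ⟨L.fpowerSeries 0, 0, hFL ▸ L.hasFPowerSeriesOnBall 0⟩
    have hinv : TableInvariant T' F := by
      intro x y hx hy
      have hrow : ∀ i : R, ∑ j, (x (i, j) - y (i, j)) = 0 := by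
        intro i
        rw [Finset.sum_sub_distrib, hx.2.2.1 i, hy.2.2.1 i, sub_self]
      have hcol : ∀ j : C, ∑ i, (x (i, j) - y (i, j)) = 0 := by
        intro j
        rw [Finset.sum_sub_distrib, hx.2.2.2 j, hy.2.2.2 j, sub_self]
      rw [hF, ← sub_eq_zero, ← Finset.sum_sub_distrib]
      have h1 : ∀ f : R × C, q f * x f - q f * y f = c f * (x f - y f) := by
        intro f
        rw [← mul_sub]
        by_cases hfQ : f ∈ Q
        · simp only [hq]; simp only [if_pos hfQ]
        · have hq0 : q f = 0 := by simp only [hq]; simp only [if_neg hfQ]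
          rw [hq0, zero_mul]
          by_cases hfs : f ∈ T'.sup
          · have hfc : f ∈ Scyc := by
              rcases hfs with hfs | hfp
              · exact Or.inl ⟨hfs, hfQ⟩
              · exact Or.inr hfp
            rw [hczero f hfc, zero_mul]
          · rw [hx.1 f hfs, hy.1 f hfs, sub_self, mul_zero]
      calc ∑ f : R × C, (q f * x f - q f * y f)
          = ∑ f : R × C, c f * (x f - y f) := Finset.sum_congr rfl fun f _ => h1 f
        _ = 0 := by
          rw [Fintype.sum_prod_type]
          have expand : ∀ (i : R) (j : C), c (i, j) * (x (i, j) - y (i, j)) =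
              (if Sum.inl i ∈ U then (1:ℝ) else 0) * (x (i, j) - y (i, j)) -
              (if Sum.inr j ∈ U then (1:ℝ) else 0) * (x (i, j) - y (i, j)) := by
            intro i j; rw [hc]; ring
          simp only [expand, Finset.sum_sub_distrib]
          have hA : ∑ i : R, ∑ j : C,
              (if Sum.inl i ∈ U then (1:ℝ) else 0) * (x (i, j) - y (i, j)) = 0 := by
            refine Finset.sum_eq_zero fun i _ => ?_
            rw [← Finset.mul_sum, hrow i, mul_zero]
          have hB : ∑ i : R, ∑ j : C,
              (if Sum.inr j ∈ U then (1:ℝ) else 0) * (x (i, j) - y (i, j)) = 0 := by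
            rw [Finset.sum_comm]
            refine Finset.sum_eq_zero fun j _ => ?_
            rw [← Finset.mul_sum, hcol j, mul_zero]
          rw [hA, hB, sub_self]
    have hdep : DependsOnlyOn F T'.sup := by
      intro x y hxy
      refine Finset.sum_congr rfl fun f _ => ?_
      by_cases hfQ : f ∈ Q
      · rw [hxy f (Or.inl (hQ hfQ))]
      · simp only [hq]; simp only [if_neg hfQ, zero_mul]
    set S₀ : Set (R × C) := {f | f ∈ Q ∧ c f ≠ 0} with hS₀
    have hEA : IsEA F S₀ := by
      constructor
      · intro x y hxy
        refine Finset.sum_congr rfl fun f _ => ?_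
        by_cases hfQ : f ∈ Q
        · by_cases hfc : c f = 0
          · simp only [hq]; simp only [if_pos hfQ, hfc, zero_mul]
          · rw [hxy f ⟨hfQ, hfc⟩]
        · simp only [hq]; simp only [if_neg hfQ, zero_mul]
      · intro S'' hS'' f₀ hf₀
        by_contra hns
        have heq := hS'' (fun _ => 0) (fun g => if g = f₀ then 1 else 0)
          (fun g hg => by
            show (0:ℝ) = if g = f₀ then 1 else 0
            rw [if_neg (show g ≠ f₀ from fun h => hns (h ▸ hg))])
        rw [hF] at heq
        simp only [mul_zero, Finset.sum_const_zero, mul_ite, mul_one] at heq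
        rw [Finset.sum_ite_eq' Finset.univ f₀ q] at heq
        simp only [Finset.mem_univ, if_true] at heq
        have : q f₀ = c f₀ := by simp only [hq]; simp only [if_pos hf₀.1]
        exact hf₀.2 (by rw [← this, ← heq])
    exact htp ⟨F, S₀, hFentire, hdep, hinv, hEA, fun f hf => hf.1, ⟨e₀, ⟨he₀Q, he₀c⟩⟩⟩
  · -- connectivity → TotallyProtected
    intro hconn
    rintro ⟨F, S', hent, hdepsup, hinv, hEA, hS'Q, hS'ne⟩
    have hcyc : ∀ e' : R × C, ∃ wvec : R × C → ℝ,
        (∀ f, f ∉ Scyc → wvec f = (if e' ∈ S' ∧ f = e' then 1 else 0)) ∧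
        (∀ i, ∑ j, wvec (i, j) = 0) ∧ (∀ j, ∑ i, wvec (i, j) = 0) := by
      intro e'
      by_cases he' : e' ∈ S'
      · have heQ : e' ∈ Q := hS'Q he'
        have hconn' : Conn Scyc (Sum.inl e'.1) (Sum.inr e'.2) := by
          have hD := hconn {w | Conn Q (Sum.inl e'.1) w} ⟨Sum.inl e'.1, rfl⟩
          exact hD _ Relation.ReflTransGen.refl _
            (Relation.ReflTransGen.single ⟨e', heQ, Or.inl ⟨rfl, rfl⟩⟩)
        obtain ⟨z, hz0, hzr, hzc⟩ := walk_vec hconn'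
        refine ⟨(fun f => if f = e' then 1 else 0) - z, ?_, ?_, ?_⟩
        · intro f hf
          simp only [Pi.sub_apply, hz0 f hf, sub_zero, he', true_and]
        · intro i
          simp only [Pi.sub_apply, Finset.sum_sub_distrib, hzr i, sum_indicator_row]
          rcases eq_or_ne i e'.1 with h | h <;> simp [h, Sum.inl.injEq]
        · intro j
          simp only [Pi.sub_apply, Finset.sum_sub_distrib, hzc j, sum_indicator_col]
          rcases eq_or_ne j e'.2 with h | h <;> simp [h, Sum.inr.injEq]
      · refine ⟨0, ?_, by simp, by simp⟩
        intro f _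
        simp [he']
    choose wv hwv0 hwvr hwvc using hcyc
    set δ : ℝ := Finset.univ.inf' Finset.univ_nonempty
        (fun f : R × C => min (T.val f - T.lo f) (T.hi f - T.val f)) with hδdef
    have hδpos : 0 < δ := by
      rw [hδdef, Finset.lt_inf'_iff]
      intro f _
      exact lt_min (sub_pos.2 (hund f).1) (sub_pos.2 (hund f).2)
    have hδle : ∀ f : R × C, δ ≤ min (T.val f - T.lo f) (T.hi f - T.val f) :=
      fun f => Finset.inf'_le _ (Finset.mem_univ f)
    set M : ℝ := ∑ e' : R × C, ∑ f : R × C, |wv e' f| with hM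
    have hM0 : 0 ≤ M :=
      Finset.sum_nonneg fun _ _ => Finset.sum_nonneg fun _ _ => abs_nonneg _
    set ε : ℝ := δ / (M + 1) with hε
    have hεpos : 0 < ε := div_pos hδpos (by linarith)
    set tc : (R × C → ℝ) → (R × C) → ℝ :=
      fun u e' => if e' ∈ S' then u e' - T.val e' else 0 with htc
    set pert : (R × C → ℝ) → (R × C → ℝ) :=
      fun u f => T.val f + ∑ e' : R × C, tc u e' * wv e' f with hpert
    have hTvalBFA : BFA T' T.val :=
      ⟨fun e _ => rfl, fun e _ => ⟨T.lo_le e, T.le_hi e⟩, fun i => rfl, fun j => rfl⟩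
    have hpertBFA : ∀ u : R × C → ℝ, dist u T.val < ε → BFA T' (pert u) := by
      intro u hu
      have hcoef : ∀ e' : R × C, |tc u e'| ≤ ε := by
        intro e'
        simp only [htc]
        by_cases h : e' ∈ S'
        · rw [if_pos h]
          calc |u e' - T.val e'| = dist (u e') (T.val e') := (Real.dist_eq _ _).symm
            _ ≤ dist u T.val := dist_le_pi_dist u T.val e'
            _ ≤ ε := le_of_lt hu
        · rw [if_neg h]; simpa using le_of_lt hεpos
      have hΔ : ∀ f : R × C, |pert u f - T.val f| ≤ δ := by
        intro f
        have heq : pert u f - T.val f = ∑ e' : R × C, tc u e' * wv e' f := by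
          rw [hpert]; ring
        rw [heq]
        calc |∑ e' : R × C, tc u e' * wv e' f|
            ≤ ∑ e' : R × C, |tc u e' * wv e' f| := Finset.abs_sum_le_sum_abs _ _
          _ ≤ ∑ e' : R × C, ε * |wv e' f| := by
              refine Finset.sum_le_sum fun e' _ => ?_
              rw [abs_mul]
              exact mul_le_mul_of_nonneg_right (hcoef e') (abs_nonneg _)
          _ = ε * ∑ e' : R × C, |wv e' f| := (Finset.mul_sum _ _ _).symm
          _ ≤ ε * M := by
              refine mul_le_mul_of_nonneg_left ?_ (le_of_lt hεpos)
              simp only [hM]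
              refine Finset.sum_le_sum fun e' _ => ?_
              exact Finset.single_le_sum (fun g _ => abs_nonneg (wv e' g)) (Finset.mem_univ f)
          _ ≤ δ := by
              rw [hε, div_mul_eq_mul_div, div_le_iff₀ (by linarith)]
              nlinarith
      refine ⟨?_, ?_, ?_, ?_⟩
      · intro f hf
        have hfS : f ∉ Scyc := by
          intro h
          rcases h with ⟨h1, _⟩ | h2
          · exact hf (Or.inl h1)
          · exact hf (Or.inr h2)
        have hzero : ∀ e' : R × C, tc u e' * wv e' f = 0 := by
          intro e'
          rw [hwv0 e' f hfS]
          by_cases h : e' ∈ S' ∧ f = e'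
          · exact absurd (Or.inl (hQ (hS'Q (h.2 ▸ h.1)))) hf
          · rw [if_neg h, mul_zero]
        show pert u f = T.val f
        simp only [hpert]
        simp only [hzero, Finset.sum_const_zero, add_zero]
      · intro f _
        have h1 := abs_le.1 (hΔ f)
        have h2 := le_min_iff.1 (hδle f)
        constructor
        · show T.lo f ≤ pert u f
          have := h2.1; have := h1.1; linarith
        · show pert u f ≤ T.hi f
          have := h2.2; have := h1.2; linarith
      · intro i
        show ∑ j, pert u (i, j) = ∑ j, T.val (i, j)
        simp only [hpert]
        rw [Finset.sum_add_distrib]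
        have : ∑ j : C, ∑ e' : R × C, tc u e' * wv e' (i, j) = 0 := by
          rw [Finset.sum_comm]
          refine Finset.sum_eq_zero fun e' _ => ?_
          rw [← Finset.mul_sum, hwvr e' i, mul_zero]
        rw [this, add_zero]
      · intro j
        show ∑ i, pert u (i, j) = ∑ i, T.val (i, j)
        simp only [hpert]
        rw [Finset.sum_add_distrib]
        have : ∑ i : R, ∑ e' : R × C, tc u e' * wv e' (i, j) = 0 := by
          rw [Finset.sum_comm]
          refine Finset.sum_eq_zero fun e' _ => ?_
          rw [← Finset.mul_sum, hwvc e' j, mul_zero]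
        rw [this, add_zero]
    obtain ⟨p, c₀, hps⟩ := hent
    have hFa : ∀ y, AnalyticAt ℝ F y := fun y =>
      hps.analyticAt_of_mem (by rw [EMetric.mem_ball]; exact edist_lt_top y c₀)
    set A : ((R × C) → ℝ) →L[ℝ] ((R × C) → ℝ) :=
      ContinuousLinearMap.pi
        (fun f => if f ∈ S' then ContinuousLinearMap.proj f else 0) with hA
    set bv : (R × C) → ℝ := fun f => if f ∈ S' then 0 else T.val f with hbv
    set G : ((R × C) → ℝ) → ℝ := fun u => F (A u + bv) with hG
    have hpatch : ∀ (u : (R × C) → ℝ) f, (A u + bv) f = if f ∈ S' then u f else T.val f := by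
      intro u f
      simp only [hA, hbv]
      simp only [Pi.add_apply, ContinuousLinearMap.pi_apply]
      by_cases h : f ∈ S' <;> simp [h]
    have hGa : AnalyticOnNhd ℝ G Set.univ := by
      intro y _
      have hinner : AnalyticAt ℝ (fun u : (R × C) → ℝ => A u + bv) y :=
        (A.analyticAt y).add analyticAt_const
      exact AnalyticAt.comp (g := F) (f := fun u : (R × C) → ℝ => A u + bv) (x := y) (hFa _) hinner
    have hGconst : ∀ u, dist u T.val < ε → G u = F T.val := by
      intro u hu
      have h1 : G u = F (pert u) := by
        apply hEA.1
        intro f hf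
        rw [hpatch u f, if_pos hf]
        have hfS : f ∉ Scyc := hQdisj f (hS'Q hf)
        have hterm : ∀ e' : R × C, tc u e' * wv e' f =
            if e' = f then u f - T.val f else 0 := by
          intro e'
          rw [hwv0 e' f hfS]
          by_cases h : e' = f
          · subst h
            rw [if_pos rfl, if_pos ⟨hf, rfl⟩, mul_one, htc]
            simp only [if_pos hf]
          · rw [if_neg h, if_neg (fun hh : _ ∧ f = e' => h hh.2.symm), mul_zero]
        simp only [hpert]
        simp only [hterm, Finset.sum_ite_eq' Finset.univ f, Finset.mem_univ, if_true]
        ring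
      rw [h1]
      exact hinv (pert u) T.val (hpertBFA u hu) hTvalBFA
    have hev : G =ᶠ[nhds T.val] fun _ => F T.val := by
      filter_upwards [Metric.ball_mem_nhds T.val hεpos] with u hu
      exact hGconst u (by rwa [Metric.mem_ball] at hu)
    have hid := AnalyticOnNhd.eqOn_of_preconnected_of_eventuallyEq hGa
      (fun y _ => analyticAt_const) isPreconnected_univ (Set.mem_univ T.val) hev
    have hFconst : ∀ x : (R × C) → ℝ, F x = F T.val := by
      intro x
      have h1 : F x = G x := by
        apply hEA.1
        intro f hf
        rw [hpatch x f, if_pos hf]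
      rw [h1]
      exact hid (Set.mem_univ x)
    have hdep0 : DependsOnlyOn F (∅ : Set (R × C)) :=
      fun x y _ => (hFconst x).trans (hFconst y).symm
    obtain ⟨f₀, hf₀⟩ := hS'ne
    exact (hEA.2 ∅ hdep0 hf₀).elim
end

section
/- Let A and B be finite sets, E a set of edges of the complete bipartite graph on A ⊔ B, Q ⊆ E, and P any set of edges of the complete bipartite graph on A ⊔ B. Then the following are equivalent: (1) for every connected component D of (A, B, Q), all vertices of D lie in a single connected component of (A, B, (E − Q) ∪ P); (2) for every connected component D of (A, B, E), all vertices of D lie in a single connected component of (A, B, (E − Q) ∪ P). -/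
/-! Both conditions say that connectivity in a smaller graph implies connectivity in
`T = (E \ Q) ∪ P`, for the edge sets `Q` and `E` respectively. Since `Q ⊆ E ⊆ Q ∪ T`, every edge
of `E` either lies in `T` or joins two vertices that are `Q`-connected, so `E`-connectivity
implies `T`-connectivity as soon as `Q`-connectivity does. -/

variable {R C : Type*}

variable {S T U : Set (R × C)} {v w : R ⊕ C}

theorem Adj.symm (h : Adj S v w) : Adj S w v := by
  obtain ⟨e, he, h | h⟩ := h
  · exact ⟨e, he, Or.inr ⟨h.2, h.1⟩⟩
  · exact ⟨e, he, Or.inl ⟨h.2, h.1⟩⟩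

theorem Adj.mono (hST : S ⊆ T) (h : Adj S v w) : Adj T v w := by
  obtain ⟨e, he, h⟩ := h
  exact ⟨e, hST he, h⟩

theorem Adj.or_of_subset_union (hS : S ⊆ T ∪ U) (h : Adj S v w) : Adj T v w ∨ Adj U v w := by
  obtain ⟨e, he, h⟩ := h
  rcases hS he with heT | heU
  · exact Or.inl ⟨e, heT, h⟩
  · exact Or.inr ⟨e, heU, h⟩

instance : Std.Symm (Adj S) := ⟨fun _ _ ↦ Adj.symm⟩

theorem Conn.symm (h : Conn S v w) : Conn S w v :=
  Std.Symm.symm (r := Relation.ReflTransGen (Adj S)) _ _ h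

theorem Conn.mono (hST : S ⊆ T) (h : Conn S v w) : Conn T v w :=
  Relation.ReflTransGen.mono (fun _ _ ↦ Adj.mono hST) _ _ h

theorem Conn.of_adj_imp_conn (hS : ∀ v w, Adj S v w → Conn T v w) (h : Conn S v w) :
    Conn T v w :=
  Relation.ReflTransGen.lift' id hS _ _ h

theorem forall_isCC_connectedOn_iff :
    (∀ D : Set (R ⊕ C), IsCC S D → ConnectedOn T D) ↔ ∀ v w, Conn S v w → Conn T v w := by
  constructor
  · intro h v w hvw
    exact h _ ⟨v, rfl⟩ v .refl w hvw
  · rintro h D ⟨u, rfl⟩ v hv w hw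
    exact h _ _ (hv.symm.trans hw)

theorem conn_imp_conn_iff_of_subset_of_subset_union (hSU : S ⊆ U) (hUS : U ⊆ S ∪ T) :
    (∀ v w, Conn S v w → Conn T v w) ↔ ∀ v w, Conn U v w → Conn T v w := by
  refine ⟨fun h v w ↦ Conn.of_adj_imp_conn fun a b hab ↦ ?_, fun h v w hvw ↦ h v w (hvw.mono hSU)⟩
  rcases hab.or_of_subset_union hUS with habS | habT
  · exact h a b (.single habS)
  · exact .single habT

theorem stmt15_general {A B : Type*}
    (E Q : Set (A × B)) (hQE : Q ⊆ E) (P : Set (A × B)) :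
    (∀ D : Set (A ⊕ B), IsCC Q D → ConnectedOn ((E \ Q) ∪ P) D) ↔
    (∀ D : Set (A ⊕ B), IsCC E D → ConnectedOn ((E \ Q) ∪ P) D) := by
  simp only [forall_isCC_connectedOn_iff]
  refine conn_imp_conn_iff_of_subset_of_subset_union hQE fun e he ↦ ?_
  by_cases heQ : e ∈ Q
  · exact Or.inl heQ
  · exact Or.inr (Or.inl ⟨he, heQ⟩)

/-- The vertices of each connected component of `(A, B, Q)` are connected in
`(A, B, (E - Q) ∪ P)` iff the vertices of each connected component of `(A, B, E)`
are connected in `(A, B, (E - Q) ∪ P)`. -/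
theorem stmt15 {A B : Type*} [Fintype A] [Fintype B]
    (E Q : Set (A × B)) (hQE : Q ⊆ E) (P : Set (A × B)) :
    (∀ D : Set (A ⊕ B), IsCC Q D → ConnectedOn ((E \ Q) ∪ P) D) ↔
    (∀ D : Set (A ⊕ B), IsCC E D → ConnectedOn ((E \ Q) ∪ P) D) :=
  stmt15_general E Q hQE P
end

section
/- Let V_A, V_B, V_AB be disjoint finite sets with union V, and let D₁, …, D_r be a partition of V. Let D_i and D_j (i ≠ j) be two bad blocks, each containing at least one vertex of V_A and at least one vertex of V_B. Then there is no semi-tripartite edge set P̂ in which every edge has one endpoint in D_i and the other endpoint in D_j such that all vertices of D_i ∪ D_j lie in a single connected component of the graph (D_i ∪ D_j, P̂). In other words, two bad blocks cannot be connected by edges between them alone. -/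
variable {V : Type*}

/-- A graph on `V` is semi-tripartite (w.r.t. `VA`, `VB`) if no edge joins two
vertices of `VA` and no edge joins two vertices of `VB`. -/
def SemiTri (VA VB : Set V) (G : SimpleGraph V) : Prop :=
  ∀ v w, G.Adj v w → ¬(v ∈ VA ∧ w ∈ VA) ∧ ¬(v ∈ VB ∧ w ∈ VB)

/-- A feasible edge set for the partition `D`: semi-tripartite, no edge inside a
block, and the vertices of each block lie in one connected component. -/
def Feasible (VA VB : Set V) {r : ℕ} (D : Fin r → Set V) (G : SimpleGraph V) : Prop :=
  SemiTri VA VB G ∧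
  (∀ v w, G.Adj v w → ∀ i, ¬(v ∈ D i ∧ w ∈ D i)) ∧
  (∀ i, ∀ v ∈ D i, ∀ w ∈ D i, G.Reachable v w)

/-- A good block: at least two vertices, at least one of them in `VAB`. -/
def GoodB (VAB : Set V) {r : ℕ} (D : Fin r → Set V) (i : Fin r) : Prop :=
  2 ≤ (D i).ncard ∧ (D i ∩ VAB).Nonempty

/-- A bad block: at least two vertices, none of them in `VAB`. -/
def BadB (VAB : Set V) {r : ℕ} (D : Fin r → Set V) (i : Fin r) : Prop :=
  2 ≤ (D i).ncard ∧ D i ∩ VAB = ∅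

/-- Two bad blocks cannot be connected by semi-tripartite edges between them alone. -/
theorem stmt17 [Fintype V] (VA VB VAB : Set V)
    (hAB : Disjoint VA VB) (hA : Disjoint VA VAB) (hB : Disjoint VB VAB)
    (hcover : VA ∪ VB ∪ VAB = Set.univ)
    (r : ℕ) (D : Fin r → Set V)
    (hdisj : ∀ i j, i ≠ j → Disjoint (D i) (D j))
    (hne : ∀ i, (D i).Nonempty)
    (hpart : (⋃ i, D i) = Set.univ)
    (i j : Fin r) (hij : i ≠ j)
    (hbadi : BadB VAB D i) (hbadj : BadB VAB D j)
    (hiA : (D i ∩ VA).Nonempty) (hiB : (D i ∩ VB).Nonempty)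
    (hjA : (D j ∩ VA).Nonempty) (hjB : (D j ∩ VB).Nonempty) :
    ¬ ∃ G : SimpleGraph V, SemiTri VA VB G ∧
        (∀ v w, G.Adj v w → (v ∈ D i ∧ w ∈ D j) ∨ (v ∈ D j ∧ w ∈ D i)) ∧
        (∀ v ∈ D i ∪ D j, ∀ w ∈ D i ∪ D j, G.Reachable v w) := by
  rintro ⟨G, hst, hbetween, hconn⟩
  set P : V → Prop := fun v => (v ∈ D i ∧ v ∈ VA) ∨ (v ∈ D j ∧ v ∈ VB) with hP
  have hdij := hdisj i j hij
  have step : ∀ v w, G.Adj v w → P v → P w := by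
    intro v w hvw hPv
    have hcov : ∀ x, x ∈ D i ∪ D j → x ∉ VAB := by
      rintro x (hx | hx) hxab
      · exact absurd (Set.mem_inter hx hxab) (by simp [hbadi.2])
      · exact absurd (Set.mem_inter hx hxab) (by simp [hbadj.2])
    have hall : ∀ x, x ∈ VA ∨ x ∈ VB ∨ x ∈ VAB := by
      intro x
      have : x ∈ VA ∪ VB ∪ VAB := hcover ▸ Set.mem_univ x
      rcases this with (h | h) | h
      · exact Or.inl h
      · exact Or.inr (Or.inl h)
      · exact Or.inr (Or.inr h)
    rcases hPv with ⟨hvDi, hvA⟩ | ⟨hvDj, hvB⟩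
    · have hwDj : w ∈ D j := by
        rcases hbetween v w hvw with ⟨_, hw⟩ | ⟨hv', _⟩
        · exact hw
        · exact absurd rfl (hdij.ne_of_mem hvDi hv')
      have hwnA : w ∉ VA := fun hwA => (hst v w hvw).1 ⟨hvA, hwA⟩
      have hwB : w ∈ VB := by
        rcases hall w with h | h | h
        · exact absurd h hwnA
        · exact h
        · exact absurd h (hcov w (Or.inr hwDj))
      exact Or.inr ⟨hwDj, hwB⟩
    · have hwDi : w ∈ D i := by
        rcases hbetween v w hvw with ⟨hv', _⟩ | ⟨_, hw⟩
        · exact absurd rfl (hdij.ne_of_mem hv' hvDj)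
        · exact hw
      have hwnB : w ∉ VB := fun hwB => (hst v w hvw).2 ⟨hvB, hwB⟩
      have hwA : w ∈ VA := by
        rcases hall w with h | h | h
        · exact h
        · exact absurd h hwnB
        · exact absurd h (hcov w (Or.inl hwDi))
      exact Or.inl ⟨hwDi, hwA⟩
  obtain ⟨a, haD, haA⟩ := hiA
  obtain ⟨b, hbD, hbB⟩ := hiB
  have hreach : G.Reachable a b := hconn a (Or.inl haD) b (Or.inl hbD)
  have hwalk : ∀ {v w : V}, G.Walk v w → P v → P w := by
    intro v w p
    induction p with
    | nil => exact id
    | cons h _ ih => exact fun hv => ih (step _ _ h hv)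
  have hPb : P b := hreach.elim fun p => hwalk p (Or.inl ⟨haD, haA⟩)
  rcases hPb with ⟨_, hbA⟩ | ⟨hbDj, _⟩
  · exact absurd rfl (hAB.ne_of_mem hbA hbB)
  · exact absurd rfl (hdij.ne_of_mem hbD hbDj)
end

section
/- Let T be a table with suppressed cell set E and suppressed graph H, and let F be a nonconstant linear invariant of T, i.e., there exist c₀ ∈ ℝ and c : E → ℝ with c not identically zero such that c₀ + Σ_{e∈E} c(e)·x(e) takes the same value at every bounded feasible assignment x of T, and EA(F) = {e : c(e) ≠ 0}. Then for every strongly connected component D of H, the set EA(F) ∩ E(D) is either empty or an edge cut of D, i.e., if nonempty, its removal disconnects the undirected graph with vertex set D and edge set E(D) (directions disregarded). -/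
variable {R C : Type*}

/-! A circulation `y` that is supported on suppressed cells and only pushes values away from
the bound they sit at is a feasible direction: `T.val + ε • y` is again a bounded feasible
assignment for small `ε > 0`, so every linear invariant satisfies `c ⬝ᵥ y = 0`. Each arc of `H`
carries such a unit flow, hence so does every directed path. In a strongly connected component
`D` with base vertex `v₀`, the value `c ⬝ᵥ y` of a flow `y` from `v₀` to `v` therefore depends
only on `v`, giving a potential `φ` with `φ j = φ i + c e` on every edge `e = (i, j)` of `E(D)`.
If `D` stayed connected after removing `EA(F)`, `φ` would be constant on `D`, so `c` would vanish
on `E(D)`. -/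

open Filter Topology

section

theorem eventually_add_mul_mem_Icc {lo a hi y : ℝ} (ha : a ∈ Set.Icc lo hi)
    (hpos : 0 < y → a < hi) (hneg : y < 0 → lo < a) :
    ∀ᶠ ε in 𝓝[>] (0 : ℝ), a + ε * y ∈ Set.Icc lo hi := by
  have hlim : Tendsto (fun ε => a + ε * y) (𝓝[>] 0) (𝓝 a) :=
    tendsto_nhdsWithin_of_tendsto_nhds <|
      (by fun_prop : Continuous fun ε : ℝ => a + ε * y).tendsto' 0 a (by simp)
  rcases lt_trichotomy y 0 with hy | rfl | hy
  · filter_upwards [self_mem_nhdsWithin, hlim.eventually_const_le (hneg hy)] with ε hε hlo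
    exact ⟨hlo, by nlinarith [ha.2, hε.out]⟩
  · simpa using ha
  · filter_upwards [self_mem_nhdsWithin, hlim.eventually_le_const (hpos hy)] with ε hε hhi
    exact ⟨by nlinarith [ha.1, hε.out], hhi⟩

theorem Conn.apply_eq {β : Type*} {S : Set (R × C)} {φ : R ⊕ C → β}
    (hφ : ∀ e ∈ S, φ (Sum.inl e.1) = φ (Sum.inr e.2)) {v w : R ⊕ C} (h : Conn S v w) :
    φ v = φ w := by
  induction h with
  | refl => rfl
  | tail _ hstep ih =>
    obtain ⟨e, he, ⟨rfl, rfl⟩ | ⟨rfl, rfl⟩⟩ := hstep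
    · exact ih.trans (hφ e he)
    · exact ih.trans (hφ e he).symm

structure IsFeasibleDirection (T : Table R C) (y : R × C → ℝ) : Prop where
  mem_sup : ∀ e, y e ≠ 0 → e ∈ T.sup
  lt_hi : ∀ e, 0 < y e → T.val e < T.hi e
  lo_lt : ∀ e, y e < 0 → T.lo e < T.val e

theorem IsFeasibleDirection.add {T : Table R C} {y z : R × C → ℝ} (hy : IsFeasibleDirection T y)
    (hz : IsFeasibleDirection T z) : IsFeasibleDirection T (y + z) where
  mem_sup e h := by
    by_contra he
    simp [not_imp_comm.1 (hy.mem_sup e) he, not_imp_comm.1 (hz.mem_sup e) he] at h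
  lt_hi e h := by
    rcases lt_or_ge 0 (y e) with hye | hye
    · exact hy.lt_hi e hye
    · exact hz.lt_hi e (by simp only [Pi.add_apply] at h; linarith)
  lo_lt e h := by
    rcases lt_or_ge (y e) 0 with hye | hye
    · exact hy.lo_lt e hye
    · exact hz.lo_lt e (by simp only [Pi.add_apply] at h; linarith)

theorem isFeasibleDirection_single [DecidableEq R] [DecidableEq C] {T : Table R C} {e : R × C}
    {r : ℝ} (he : e ∈ T.sup) (hpos : 0 < r → T.val e < T.hi e) (hneg : r < 0 → T.lo e < T.val e) :
    IsFeasibleDirection T (Pi.single e r) where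
  mem_sup e' h := by
    obtain rfl : e' = e := by by_contra h'; simp [h'] at h
    exact he
  lt_hi e' h := by
    obtain rfl : e' = e := by by_contra h'; simp [h'] at h
    exact hpos (by simpa using h)
  lo_lt e' h := by
    obtain rfl : e' = e := by by_contra h'; simp [h'] at h
    exact hneg (by simpa using h)

variable [Fintype R] [Fintype C]

/-- A positive value on a cell counts as flow from its row to its column. -/
def netOutflow (y : R × C → ℝ) : R ⊕ C → ℝ :=
  Sum.elim (fun i => ∑ j, y (i, j)) (fun j => -∑ i, y (i, j))

theorem netOutflow_add (y z : R × C → ℝ) : netOutflow (y + z) = netOutflow y + netOutflow z := by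
  ext (i | j) <;> simp [netOutflow, Finset.sum_add_distrib]; ring

theorem netOutflow_single [DecidableEq R] [DecidableEq C] (e : R × C) (r : ℝ) :
    netOutflow (Pi.single e r) = Pi.single (Sum.inl e.1) r - Pi.single (Sum.inr e.2) r := by
  ext (i | j) <;> simp [netOutflow, Pi.single_apply, Prod.ext_iff, ite_and, Finset.sum_ite_irrel]

theorem bfa_val (T : Table R C) : BFA T T.val :=
  ⟨fun _ _ => rfl, fun e _ => ⟨T.lo_le e, T.le_hi e⟩, fun _ => rfl, fun _ => rfl⟩

theorem eventually_bfa_val_add_smul {T : Table R C} {y : R × C → ℝ}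
    (hy : IsFeasibleDirection T y) (hcirc : netOutflow y = 0) :
    ∀ᶠ ε in 𝓝[>] (0 : ℝ), BFA T (T.val + ε • y) := by
  have hbox : ∀ᶠ ε in 𝓝[>] (0 : ℝ), ∀ e, T.val e + ε * y e ∈ Set.Icc (T.lo e) (T.hi e) :=
    eventually_all.2 fun e =>
      eventually_add_mul_mem_Icc ⟨T.lo_le e, T.le_hi e⟩ (hy.lt_hi e) (hy.lo_lt e)
  filter_upwards [hbox] with ε hε
  refine ⟨fun e he => ?_, fun e _ => hε e, fun i => ?_, fun j => ?_⟩
  · simp [not_imp_comm.1 (hy.mem_sup e) he]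
  · have hrow := congrFun hcirc (.inl i)
    simp only [netOutflow, Sum.elim_inl, Pi.zero_apply] at hrow
    simp [Finset.sum_add_distrib, ← Finset.mul_sum, hrow]
  · have hcol := congrFun hcirc (.inr j)
    simp only [netOutflow, Sum.elim_inr, Pi.zero_apply, neg_eq_zero] at hcol
    simp [Finset.sum_add_distrib, ← Finset.mul_sum, hcol]

def IsLinearInvariant (T : Table R C) (c₀ : ℝ) (c : R × C → ℝ) : Prop :=
  ∃ ρ : ℝ, ∀ x, BFA T x → c₀ + c ⬝ᵥ x = ρ

theorem IsLinearInvariant.dotProduct_eq_zero {T : Table R C} {c₀ : ℝ} {c y : R × C → ℝ}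
    (hinv : IsLinearInvariant T c₀ c) (hy : IsFeasibleDirection T y) (hcirc : netOutflow y = 0) :
    c ⬝ᵥ y = 0 := by
  obtain ⟨ρ, hρ⟩ := hinv
  obtain ⟨ε, hε, hεpos⟩ := ((eventually_bfa_val_add_smul hy hcirc).and self_mem_nhdsWithin).exists
  have hmoved := hρ _ hε
  rw [dotProduct_add, dotProduct_smul, smul_eq_mul, ← hρ _ (bfa_val T)] at hmoved
  exact (mul_eq_zero.1 (by linarith)).resolve_left (ne_of_gt hεpos)

variable [DecidableEq R] [DecidableEq C]

structure IsFlow (T : Table R C) (v w : R ⊕ C) (y : R × C → ℝ) : Prop where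
  feasible : IsFeasibleDirection T y
  netOutflow_eq : netOutflow y = Pi.single v 1 - Pi.single w 1

theorem isFlow_zero (T : Table R C) (v : R ⊕ C) : IsFlow T v v 0 where
  feasible := ⟨by simp, by simp, by simp⟩
  netOutflow_eq := by ext (i | j) <;> simp [netOutflow]

theorem IsFlow.trans {T : Table R C} {v w u : R ⊕ C} {y z : R × C → ℝ} (hy : IsFlow T v w y)
    (hz : IsFlow T w u z) : IsFlow T v u (y + z) where
  feasible := hy.feasible.add hz.feasible
  netOutflow_eq := by rw [netOutflow_add, hy.netOutflow_eq, hz.netOutflow_eq, sub_add_sub_cancel]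

theorem isFlow_single_of_lt_hi {T : Table R C} {e : R × C} (he : e ∈ T.sup)
    (h : T.val e < T.hi e) : IsFlow T (Sum.inl e.1) (Sum.inr e.2) (Pi.single e 1) where
  feasible := isFeasibleDirection_single he (fun _ => h) (by norm_num)
  netOutflow_eq := netOutflow_single e 1

theorem isFlow_single_neg_of_lo_lt {T : Table R C} {e : R × C} (he : e ∈ T.sup)
    (h : T.lo e < T.val e) : IsFlow T (Sum.inr e.2) (Sum.inl e.1) (Pi.single e (-1)) where
  feasible := isFeasibleDirection_single he (by norm_num) (fun _ => h)
  netOutflow_eq := by rw [netOutflow_single, Pi.single_neg, Pi.single_neg, neg_sub_neg]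

theorem MReach.exists_isFlow {T : Table R C} {v w : R ⊕ C} (h : MReach T T.sup v w) :
    ∃ y, IsFlow T v w y := by
  induction h with
  | refl => exact ⟨0, isFlow_zero T v⟩
  | tail _ hstep ih =>
    obtain ⟨y, hy⟩ := ih
    obtain ⟨e, he, ⟨hlt, rfl, rfl⟩ | ⟨hlt, rfl, rfl⟩⟩ := hstep
    · exact ⟨_, hy.trans (isFlow_single_of_lt_hi he hlt)⟩
    · exact ⟨_, hy.trans (isFlow_single_neg_of_lo_lt he hlt)⟩

theorem IsLinearInvariant.dotProduct_eq_of_isFlow {T : Table R C} {c₀ : ℝ} {c y y' : R × C → ℝ}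
    {v w : R ⊕ C} (hinv : IsLinearInvariant T c₀ c) (hy : IsFlow T v w y) (hy' : IsFlow T v w y')
    (hwv : MReach T T.sup w v) : c ⬝ᵥ y = c ⬝ᵥ y' := by
  obtain ⟨z, hz⟩ := hwv.exists_isFlow
  have hcirc : ∀ {y}, IsFlow T v w y → c ⬝ᵥ y + c ⬝ᵥ z = 0 := fun hy => by
    have hyz := hy.trans hz
    rw [← dotProduct_add]
    exact hinv.dotProduct_eq_zero hyz.feasible (by rw [hyz.netOutflow_eq, sub_self])
  linarith [hcirc hy, hcirc hy']

theorem IsLinearInvariant.exists_potential {T : Table R C} {c₀ : ℝ} {c : R × C → ℝ}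
    (hinv : IsLinearInvariant T c₀ c) {D : Set (R ⊕ C)} (hD : IsSCC T T.sup D) :
    ∃ φ : R ⊕ C → ℝ, ∀ e ∈ EdgesIn T.sup D, φ (Sum.inr e.2) = φ (Sum.inl e.1) + c e := by
  obtain ⟨v₀, rfl⟩ := hD
  have hwd : ∀ v ∈ {w | MutReach T T.sup v₀ w}, ∃ r, ∀ y, IsFlow T v₀ v y → c ⬝ᵥ y = r := by
    rintro v ⟨hfwd, hbwd⟩
    obtain ⟨y₀, hy₀⟩ := hfwd.exists_isFlow
    exact ⟨c ⬝ᵥ y₀, fun y hy => hinv.dotProduct_eq_of_isFlow hy hy₀ hbwd⟩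
  choose! φ hφ using hwd
  refine ⟨φ, fun e ⟨he, hrow, hcol⟩ => ?_⟩
  rcases lt_or_ge (T.val e) (T.hi e) with hlt | hge
  · obtain ⟨y, hy⟩ := hrow.1.exists_isFlow
    rw [← hφ _ hrow y hy, ← hφ _ hcol _ (hy.trans (isFlow_single_of_lt_hi he hlt)),
      dotProduct_add, dotProduct_single, mul_one]
  · obtain ⟨y, hy⟩ := hcol.1.exists_isFlow
    have hlo : T.lo e < T.val e := (T.lo_lt_hi e).trans_le hge
    rw [← hφ _ hcol y hy, ← hφ _ hrow _ (hy.trans (isFlow_single_neg_of_lo_lt he hlo)),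
      dotProduct_add, dotProduct_single]
    ring

end

theorem stmt18_general [Fintype R] [Fintype C]
    (T : Table R C) (c₀ : ℝ) (c : R × C → ℝ)
    (hinv : ∃ ρ : ℝ, ∀ x, BFA T x → c₀ + ∑ e : R × C, c e * x e = ρ) :
    ∀ D : Set (R ⊕ C), IsSCC T T.sup D →
      ({e | c e ≠ 0} ∩ EdgesIn T.sup D).Nonempty →
      ¬ ConnectedOn (EdgesIn T.sup D \ {e | c e ≠ 0}) D := by
  classical
  rintro D hD ⟨e, hce, he⟩ hconn
  obtain ⟨φ, hφ⟩ := IsLinearInvariant.exists_potential (c₀ := c₀) hinv hD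
  have hφe : φ (Sum.inl e.1) = φ (Sum.inr e.2) :=
    (hconn _ he.2.1 _ he.2.2).apply_eq fun f hf => by
      rw [hφ f hf.1, show c f = 0 by simpa using hf.2, add_zero]
  exact hce (by linarith [hφ e he])

/-- For a nonconstant linear invariant `c₀ + ∑ c e * x e` (with coefficients supported
on the suppressed cells), the intersection of its effective area `{e | c e ≠ 0}` with
the edge set of any strongly connected component `D` of the suppressed graph is either
empty or an edge cut of `D`. -/
theorem stmt18 [Fintype R] [Fintype C] [Nonempty R] [Nonempty C]
    (T : Table R C) (c₀ : ℝ) (c : R × C → ℝ)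
    (hsupp : ∀ e, e ∉ T.sup → c e = 0)
    (hnz : ∃ e ∈ T.sup, c e ≠ 0)
    (hinv : ∃ ρ : ℝ, ∀ x, BFA T x → c₀ + ∑ e : R × C, c e * x e = ρ) :
    ∀ D : Set (R ⊕ C), IsSCC T T.sup D →
      ({e | c e ≠ 0} ∩ EdgesIn T.sup D).Nonempty →
      ¬ ConnectedOn (EdgesIn T.sup D \ {e | c e ≠ 0}) D :=
  stmt18_general T c₀ c hinv
end
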